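/- arXiv:1201.3947 — 4 statements merged into one kernel-verified Lean document; each statement's English description precedes it below -/
import Mathlib

section
/- Let γ be the standard Gaussian measure on ℝ and γ_∞ the countable product measure on ℝ^ℕ. For every real number a and every Borel set K ⊆ ℝ^ℕ, ∫ γ_∞(√(1+a²)·K + a·y) dγ_∞(y) = γ_∞(K), where √(1+a²)·K + a·y denotes the set {√(1+a²)·x + a·y : x ∈ K}. -/
open MeasureTheory ProbabilityTheory

/-!
With `c = √(1 + a²)`, the image `c • K + a • y` is the preimage of `K` under
`z ↦ c⁻¹ • (z - a • y)`, so by Fubini the integral is the `γ_∞ ⊗ γ_∞`-measure of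
`T⁻¹ K`, where `T (y, z) = c⁻¹ • (z - a • y)`. Coordinatewise `T` is the rotation
`(y, z) ↦ u y + w z` with `u = -a / c`, `w = 1 / c`, `u² + w² = 1`, which maps `γ ⊗ γ` to `γ`.
Since `γ_∞` is the infinite product of its one-dimensional marginals, `γ_∞ ⊗ γ_∞` is the
infinite product of copies of `γ ⊗ γ`, so `T` maps it to `γ_∞`.
-/

/-- `μ` is the countable product of standard one-dimensional Gaussian measures on `ℝ^ℕ`:
a probability measure whose coordinates are i.i.d. standard Gaussians. -/
def IsStdGaussianSeq (μ : Measure (ℕ → ℝ)) : Prop :=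
  IsProbabilityMeasure μ ∧
  iIndepFun (fun i (x : ℕ → ℝ) => x i) μ ∧
  ∀ i, μ.map (fun x => x i) = gaussianReal 0 1

open scoped NNReal

lemma gaussianReal_prod_map_linear (m₁ m₂ : ℝ) (v₁ v₂ : ℝ≥0) (u w : ℝ) :
    ((gaussianReal m₁ v₁).prod (gaussianReal m₂ v₂)).map (fun q => u * q.1 + w * q.2)
      = gaussianReal (u * m₁ + w * m₂)
          (⟨u ^ 2, sq_nonneg _⟩ * v₁ + ⟨w ^ 2, sq_nonneg _⟩ * v₂) := by
  have hcomp : (fun q : ℝ × ℝ => u * q.1 + w * q.2)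
      = (fun q => q.1 + q.2) ∘ Prod.map (u * ·) (w * ·) := rfl
  rw [hcomp, ← Measure.map_map (by fun_prop) (by fun_prop),
    ← Measure.map_prod_map _ _ (by fun_prop) (by fun_prop),
    gaussianReal_map_const_mul, gaussianReal_map_const_mul, ← gaussianReal_conv_gaussianReal]
  rfl

lemma MeasureTheory.Measure.infinitePi_prod_infinitePi_map_zip {ι α β : Type*}
    [MeasurableSpace α] [MeasurableSpace β]
    (μ : ι → Measure α) (ν : ι → Measure β)
    [∀ i, IsProbabilityMeasure (μ i)] [∀ i, IsProbabilityMeasure (ν i)] :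
    ((Measure.infinitePi μ).prod (Measure.infinitePi ν)).map (fun p i => (p.1 i, p.2 i))
      = Measure.infinitePi fun i => (μ i).prod (ν i) := by
  refine IsProjectiveLimit.unique (fun I => ?_) (Measure.isProjectiveLimit_infinitePi _)
  have hcomp : I.restrict ∘ (fun (p : (ι → α) × (ι → β)) i => (p.1 i, p.2 i))
      = (MeasurableEquiv.arrowProdEquivProdArrow α β I).symm ∘ Prod.map I.restrict I.restrict :=
    rfl
  rw [Measure.map_map (by fun_prop) (by fun_prop), hcomp,
    ← Measure.map_map (by fun_prop) (by fun_prop),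
    ← Measure.map_prod_map _ _ (by fun_prop) (by fun_prop),
    Measure.infinitePi_map_restrict, Measure.infinitePi_map_restrict]
  exact (measurePreserving_arrowProdEquivProdArrow α β I _ _).symm.map_eq

lemma infinitePi_gaussianReal_prod_map_rotation (ι : Type*) {u w : ℝ} (huw : u ^ 2 + w ^ 2 = 1) :
    ((Measure.infinitePi fun _ : ι => gaussianReal 0 1).prod
        (Measure.infinitePi fun _ : ι => gaussianReal 0 1)).map (fun p => u • p.1 + w • p.2)
      = Measure.infinitePi fun _ : ι => gaussianReal 0 1 := by
  let g : ℝ × ℝ → ℝ := fun q => u * q.1 + w * q.2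
  have hcomp : (fun p : (ι → ℝ) × (ι → ℝ) => u • p.1 + w • p.2)
      = (fun z i => g (z i)) ∘ (fun p i => (p.1 i, p.2 i)) := rfl
  rw [hcomp, ← Measure.map_map (by fun_prop) (by fun_prop),
    Measure.infinitePi_prod_infinitePi_map_zip,
    Measure.infinitePi_map_pi (f := fun _ => g) _ fun _ => by fun_prop,
    gaussianReal_prod_map_linear]
  have hvar : (⟨u ^ 2, sq_nonneg _⟩ * 1 + ⟨w ^ 2, sq_nonneg _⟩ * 1 : ℝ≥0) = 1 :=
    NNReal.eq (by change u ^ 2 * 1 + w ^ 2 * 1 = 1; simpa using huw)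
  simp_rw [mul_zero, add_zero, hvar]

lemma IsStdGaussianSeq.eq_infinitePi {μ : Measure (ℕ → ℝ)} (hμ : IsStdGaussianSeq μ) :
    μ = Measure.infinitePi fun _ => gaussianReal 0 1 := by
  obtain ⟨-, hindep, hlaw⟩ := hμ
  simpa [hlaw] using hindep.map_fun_eq_infinitePi_map fun i => measurable_pi_apply i

lemma Set.image_smul_add_eq_preimage {𝕜 E : Type*} [Field 𝕜] [AddCommGroup E] [Module 𝕜 E]
    {c : 𝕜} (hc : c ≠ 0) (w : E) (K : Set E) :
    (fun x => c • x + w) '' K = (fun z => c⁻¹ • (z - w)) ⁻¹' K :=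
  congrFun (Set.image_eq_preimage_of_inverse (fun x => by simp [smul_smul, hc])
    (fun z => by simp [smul_smul, hc])) K

theorem stmt_0 (γinf : Measure (ℕ → ℝ)) (hγ : IsStdGaussianSeq γinf) (a : ℝ)
    (K : Set (ℕ → ℝ)) (hK : MeasurableSet K) :
    ∫⁻ y, γinf ((fun x => Real.sqrt (1 + a ^ 2) • x + a • y) '' K) ∂γinf = γinf K := by
  set c := Real.sqrt (1 + a ^ 2)
  have hc2 : c ^ 2 = 1 + a ^ 2 := Real.sq_sqrt (by positivity)
  have hc : c ≠ 0 := by positivity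
  set T : (ℕ → ℝ) × (ℕ → ℝ) → (ℕ → ℝ) := fun p => c⁻¹ • (p.2 - a • p.1)
  have hT : Measurable T := by fun_prop
  have hTγ : (γinf.prod γinf).map T = γinf := by
    have hT_rot : T = fun p => (-(c⁻¹ * a)) • p.1 + c⁻¹ • p.2 := by
      funext p; simp only [T, smul_sub, smul_smul]; module
    rw [hT_rot, hγ.eq_infinitePi]
    exact infinitePi_gaussianReal_prod_map_rotation ℕ (by field_simp; linear_combination -hc2)
  have : IsProbabilityMeasure γinf := hγ.1
  calc ∫⁻ y, γinf ((fun x => c • x + a • y) '' K) ∂γinf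
      = (γinf.prod γinf) (T ⁻¹' K) := by
        simp_rw [Set.image_smul_add_eq_preimage hc, Measure.prod_apply (hT hK)]
        rfl
    _ = γinf K := by rw [← Measure.map_apply hT hK, hTγ]
end

section
/- Let γ_∞ be the product of standard Gaussian measures on ℝ^ℕ and let a, b ∈ ℝ with a² ≠ b² + 1. Then for γ_∞-almost every y ∈ ℝ^ℕ, the set a·K + b·y has γ_∞-measure 0, where K = {x ∈ ℝ^ℕ : lim_{n→∞}((1/n)Σ_{k<n} x(k)²)^{1/2} = 1}. -/
/-!
By the strong law of large numbers, for `γ`-a.e. `y` and `γ`-a.e. `z` the running means of `z²`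
and `y²` tend to `1`, and the running mean of `y z` tends to `0` (the products `y k * z k` are
i.i.d. centred under `γ ⊗ γ`). If `z = a x + b y` with `x ∈ K`, expanding `y z` shows that the
running mean of `a x y` tends to `-b`; expanding `z²` then shows that its running mean tends to
`a² + 2b(-b) + b² = a² - b²`, forcing `a² = b² + 1`.
-/

open MeasureTheory ProbabilityTheory Filter Finset Function
open scoped Topology NNReal

section Product

variable {Ω Ω' α β : Type*} [MeasurableSpace Ω] [MeasurableSpace Ω'] [MeasurableSpace α]
  [MeasurableSpace β] {μ : Measure Ω} {ν : Measure Ω'}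

lemma ProbabilityTheory.IndepFun.prodMk_prod [SFinite ν] {X₁ X₂ : Ω → α} {Y₁ Y₂ : Ω' → β}
    (hX₁ : Measurable X₁) (hX₂ : Measurable X₂) (hY₁ : Measurable Y₁) (hY₂ : Measurable Y₂)
    (hX : X₁ ⟂ᵢ[μ] X₂) (hY : Y₁ ⟂ᵢ[ν] Y₂) :
    (fun p : Ω × Ω' => (X₁ p.1, Y₁ p.2)) ⟂ᵢ[μ.prod ν] (fun p => (X₂ p.1, Y₂ p.2)) := by
  rw [indepFun_iff_measure_inter_preimage_eq_mul]
  intro s t hs ht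
  have hA : MeasurableSet ((fun p : Ω × Ω' => (X₁ p.1, Y₁ p.2)) ⁻¹' s) :=
    (by fun_prop : Measurable fun p : Ω × Ω' => (X₁ p.1, Y₁ p.2)) hs
  have hB : MeasurableSet ((fun p : Ω × Ω' => (X₂ p.1, Y₂ p.2)) ⁻¹' t) :=
    (by fun_prop : Measurable fun p : Ω × Ω' => (X₂ p.1, Y₂ p.2)) ht
  have hF : Measurable fun u => ν (Y₁ ⁻¹' (Prod.mk u ⁻¹' s)) :=
    measurable_measure_prodMk_left ((by fun_prop : Measurable fun q : α × Ω' => (q.1, Y₁ q.2)) hs)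
  have hG : Measurable fun u => ν (Y₂ ⁻¹' (Prod.mk u ⁻¹' t)) :=
    measurable_measure_prodMk_left ((by fun_prop : Measurable fun q : α × Ω' => (q.1, Y₂ q.2)) ht)
  -- Fubini: the slice at `ω` is a pair of `Y`-preimages, split by `hY`; what is left is a product
  -- of functions of `X₁ ω` and `X₂ ω`, split by `hX`.
  rw [Measure.prod_apply (hA.inter hB), Measure.prod_apply hA, Measure.prod_apply hB]
  calc ∫⁻ ω, ν (Y₁ ⁻¹' (Prod.mk (X₁ ω) ⁻¹' s) ∩ Y₂ ⁻¹' (Prod.mk (X₂ ω) ⁻¹' t)) ∂μ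
      = ∫⁻ ω, ν (Y₁ ⁻¹' (Prod.mk (X₁ ω) ⁻¹' s)) * ν (Y₂ ⁻¹' (Prod.mk (X₂ ω) ⁻¹' t)) ∂μ :=
        lintegral_congr fun ω => hY.measure_inter_preimage_eq_mul _ _
          (measurable_prodMk_left hs) (measurable_prodMk_left ht)
    _ = _ := lintegral_mul_eq_lintegral_mul_lintegral_of_indepFun
        (hF.comp hX₁) (hG.comp hX₂) (hX.comp hF hG)

lemma ProbabilityTheory.IdentDistrib.prodMap [SigmaFinite μ] [SigmaFinite ν] {μ' : Measure Ω}
    {ν' : Measure Ω'} [SigmaFinite μ'] [SigmaFinite ν'] {X X' : Ω → α} {Y Y' : Ω' → β}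
    (hX : Measurable X) (hX' : Measurable X') (hY : Measurable Y) (hY' : Measurable Y')
    (hXX' : IdentDistrib X X' μ μ') (hYY' : IdentDistrib Y Y' ν ν') :
    IdentDistrib (Prod.map X Y) (Prod.map X' Y') (μ.prod ν) (μ'.prod ν') where
  aemeasurable_fst := (hX.prodMap hY).aemeasurable
  aemeasurable_snd := (hX'.prodMap hY').aemeasurable
  map_eq := by rw [← Measure.map_prod_map _ _ hX hY, ← Measure.map_prod_map _ _ hX' hY',
    hXX'.map_eq, hYY'.map_eq]

theorem ProbabilityTheory.strong_law_ae_real_prod_mul [IsProbabilityMeasure μ]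
    [IsProbabilityMeasure ν] {X : ℕ → Ω → ℝ} {Y : ℕ → Ω' → ℝ}
    (hXm : ∀ i, Measurable (X i)) (hYm : ∀ i, Measurable (Y i))
    (hXint : Integrable (X 0) μ) (hYint : Integrable (Y 0) ν)
    (hXindep : Pairwise ((· ⟂ᵢ[μ] ·) on X)) (hYindep : Pairwise ((· ⟂ᵢ[ν] ·) on Y))
    (hXident : ∀ i, IdentDistrib (X i) (X 0) μ μ) (hYident : ∀ i, IdentDistrib (Y i) (Y 0) ν ν) :
    ∀ᵐ p ∂μ.prod ν, Tendsto (fun n : ℕ => (∑ i ∈ range n, X i p.1 * Y i p.2) / n) atTop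
      (𝓝 (μ[X 0] * ν[Y 0])) := by
  have hmul : Measurable fun q : ℝ × ℝ => q.1 * q.2 := by fun_prop
  have := strong_law_ae_real (μ := μ.prod ν) (fun i p => X i p.1 * Y i p.2)
    (hXint.mul_prod hYint)
    (fun i j hij => ((hXindep hij).prodMk_prod (hXm i) (hXm j) (hYm i) (hYm j) (hYindep hij)).comp
      hmul hmul)
    (fun i => ((hXident i).prodMap (hXm i) (hXm 0) (hYm i) (hYm 0) (hYident i)).comp hmul)
  rwa [integral_prod_mul] at this

end Product

lemma ProbabilityTheory.integral_sq_gaussianReal (m : ℝ) (v : ℝ≥0) :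
    ∫ x, x ^ 2 ∂gaussianReal m v = v + m ^ 2 := by
  have := variance_eq_sub (memLp_id_gaussianReal (μ := m) (v := v) 2)
  simp only [variance_id_gaussianReal, Pi.pow_apply, id, integral_id_gaussianReal] at this
  linarith

noncomputable def runningMean : (ℕ → ℝ) →ₗ[ℝ] ℕ → ℝ where
  toFun f n := (∑ k ∈ range n, f k) / n
  map_add' f g := by ext n; simp [sum_add_distrib, add_div]
  map_smul' c f := by ext n; simp [← mul_sum, mul_div_assoc]

lemma runningMean_apply (f : ℕ → ℝ) (n : ℕ) : runningMean f n = (∑ k ∈ range n, f k) / n := rfl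

lemma sq_eq_sq_add_one_of_tendsto_runningMean {x y : ℕ → ℝ} {a b : ℝ}
    (hx : Tendsto (runningMean (x ^ 2)) atTop (𝓝 1)) (hy : Tendsto (runningMean (y ^ 2)) atTop (𝓝 1))
    (hyz : Tendsto (runningMean (y * (a • x + b • y))) atTop (𝓝 0))
    (hz : Tendsto (runningMean ((a • x + b • y) ^ 2)) atTop (𝓝 1)) :
    a ^ 2 = b ^ 2 + 1 := by
  have hyz_eq (n : ℕ) : runningMean (y * (a • x + b • y)) n =
      a * runningMean (x * y) n + b * runningMean (y ^ 2) n := by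
    rw [show y * (a • x + b • y) = a • (x * y) + b • y ^ 2 by
      ext k
      simp only [Pi.mul_apply, Pi.add_apply, Pi.smul_apply, Pi.pow_apply, smul_eq_mul]
      ring]
    simp
  have hz_eq (n : ℕ) : runningMean ((a • x + b • y) ^ 2) n = a ^ 2 * runningMean (x ^ 2) n +
      2 * b * (a * runningMean (x * y) n) + b ^ 2 * runningMean (y ^ 2) n := by
    rw [show (a • x + b • y) ^ 2 = a ^ 2 • x ^ 2 + (2 * b * a) • (x * y) + b ^ 2 • y ^ 2 by
      ext k
      simp only [Pi.mul_apply, Pi.add_apply, Pi.smul_apply, Pi.pow_apply, smul_eq_mul]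
      ring]
    simp [mul_assoc]
  have hxy : Tendsto (fun n => a * runningMean (x * y) n) atTop (𝓝 (-b)) := by
    simpa using (hyz.sub (hy.const_mul b)).congr fun n => by rw [hyz_eq]; ring
  have hz' := ((hx.const_mul (a ^ 2)).add (hxy.const_mul (2 * b))).add (hy.const_mul (b ^ 2))
  have := tendsto_nhds_unique hz (hz'.congr fun n => (hz_eq n).symm)
  linarith

lemma Filter.Tendsto.of_sqrt {α : Type*} {l : Filter α} {f : α → ℝ} {c : ℝ} (hf : ∀ a, 0 ≤ f a)
    (h : Tendsto (fun a => √(f a)) l (𝓝 c)) : Tendsto f l (𝓝 (c ^ 2)) := by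
  simpa [Real.sq_sqrt (hf _)] using h.pow 2

namespace IsStdGaussianSeq

variable {μ : Measure (ℕ → ℝ)}

lemma identDistrib_coord (hμ : IsStdGaussianSeq μ) (i : ℕ) :
    IdentDistrib (fun x : ℕ → ℝ => x i) id μ (gaussianReal 0 1) where
  aemeasurable_fst := (measurable_pi_apply i).aemeasurable
  aemeasurable_snd := aemeasurable_id
  map_eq := by rw [hμ.2.2 i, Measure.map_id]

lemma identDistrib_coord_coord (hμ : IsStdGaussianSeq μ) (i j : ℕ) :
    IdentDistrib (fun x : ℕ → ℝ => x i) (fun x => x j) μ μ :=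
  (hμ.identDistrib_coord i).trans (hμ.identDistrib_coord j).symm

lemma ae_tendsto_runningMean_sq (hμ : IsStdGaussianSeq μ) :
    ∀ᵐ x ∂μ, Tendsto (runningMean (x ^ 2)) atTop (𝓝 1) := by
  have hsq : Measurable fun t : ℝ => t ^ 2 := by fun_prop
  have h0 := (hμ.identDistrib_coord 0).comp hsq
  have hmean : ∫ x, x 0 ^ 2 ∂μ = 1 := by
    simpa [integral_sq_gaussianReal] using h0.integral_eq
  have := strong_law_ae_real (μ := μ) (fun k (x : ℕ → ℝ) => x k ^ 2)
    (h0.integrable_iff.2 (by simpa using (memLp_id_gaussianReal 2).integrable_sq))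
    (fun i j hij => (hμ.2.1.indepFun hij).comp hsq hsq)
    (fun i => (hμ.identDistrib_coord_coord i 0).comp hsq)
  rwa [hmean] at this

lemma ae_tendsto_runningMean_mul (hμ : IsStdGaussianSeq μ) :
    ∀ᵐ p ∂μ.prod μ, Tendsto (runningMean (p.1 * p.2)) atTop (𝓝 0) := by
  have : IsProbabilityMeasure μ := hμ.1
  have hint : Integrable (fun x : ℕ → ℝ => x 0) μ :=
    (hμ.identDistrib_coord 0).integrable_iff.2 ((memLp_id_gaussianReal 1).integrable le_rfl)
  have hmean : ∫ x, x 0 ∂μ = 0 := by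
    simpa [integral_id_gaussianReal] using (hμ.identDistrib_coord 0).integral_eq
  have := strong_law_ae_real_prod_mul (μ := μ) (ν := μ) (X := fun k x => x k) (Y := fun k x => x k)
    measurable_pi_apply measurable_pi_apply hint hint
    (fun i j hij => hμ.2.1.indepFun hij) (fun i j hij => hμ.2.1.indepFun hij)
    (fun i => hμ.identDistrib_coord_coord i 0) (fun i => hμ.identDistrib_coord_coord i 0)
  rwa [hmean, mul_zero] at this

end IsStdGaussianSeq

theorem stmt_7 (γinf : Measure (ℕ → ℝ)) (hγ : IsStdGaussianSeq γinf) (a b : ℝ)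
    (hab : a ^ 2 ≠ b ^ 2 + 1) :
    ∀ᵐ y ∂γinf,
      γinf ((fun x => a • x + b • y) ''
        {x : ℕ → ℝ | Filter.Tendsto
          (fun n : ℕ => Real.sqrt ((1 / (n : ℝ)) * ∑ k ∈ Finset.range n, (x k) ^ 2))
          Filter.atTop (nhds 1)}) = 0 := by
  have : IsProbabilityMeasure γinf := hγ.1
  have hsq := hγ.ae_tendsto_runningMean_sq
  filter_upwards [hsq, Measure.ae_ae_of_ae_prod hγ.ae_tendsto_runningMean_mul] with y hy hyz
  refine measure_mono_null ?_ (ae_iff.1 (hsq.and hyz))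
  rintro _ ⟨x, hx, rfl⟩ ⟨hz, hyz⟩
  refine hab (sq_eq_sq_add_one_of_tendsto_runningMean ?_ hy hyz hz)
  have := hx.of_sqrt fun n => by positivity
  rw [one_pow] at this
  exact this.congr fun n => by rw [runningMean_apply, one_div_mul_eq_div]; rfl
end

section
/- Let M be an uncountable compact metric space. Then M contains a subset P homeomorphic to the Cantor set 2^ℕ, and the restriction map f ↦ f↾P defines a continuous surjective group homomorphism from C(M, 𝕋) onto C(P, 𝕋), where 𝕋 is the circle group and both groups carry pointwise multiplication and the uniform convergence topology. Moreover, every f : P → 𝕋 continuous admits a continuous extension to M with the same uniform distance from the constant function 1. -/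
/-!
The Cantor space embeds in `M` as a closed set `P`, which is compact and totally disconnected.
On such a space every `g : P → 𝕋` lifts through `t ↦ exp (i t)`: uniformly approximating `g` by a
locally constant `c` within distance `< 2`, both `c` and `g / c` avoid `-1`, so their arguments are
continuous. A real lift extends to `M` by Tietze.
For the distance to `1`, let `D` be its supremum over `P`. If `D < 2`, then `g` takes values in
the arc `|arg z| ≤ θ := 2 arcsin (D / 2)`, so `arg ∘ g` is continuous and extends by Tietze with
values in `[-θ, θ]`, which `exp` maps back into the same arc; if `D = 2` any extension will do.
-/

open scoped ContinuousMap
open Complex Real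

namespace Circle

theorem dist_le_two (z w : Circle) : dist z w ≤ 2 := by
  have h := dist_le_norm_add_norm (z : ℂ) w
  rwa [norm_coe, norm_coe, one_add_one_eq_two] at h

theorem dist_mul_inv_one (z w : Circle) : dist (z * w⁻¹) 1 = dist z w := by
  change dist ((z * w⁻¹ : Circle) : ℂ) ((1 : Circle) : ℂ) = dist (z : ℂ) w
  rw [coe_mul, coe_inv, coe_one, dist_eq_norm, dist_eq_norm,
    ← mul_inv_cancel₀ (coe_ne_zero w), ← sub_mul, norm_mul, norm_inv, norm_coe, inv_one, mul_one]

theorem dist_exp_one_of_abs_le_pi {t : ℝ} (ht : |t| ≤ π) :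
    dist (exp t) 1 = 2 * Real.sin (|t| / 2) := by
  change dist ((exp t : Circle) : ℂ) ((1 : Circle) : ℂ) = _
  have hsin : |Real.sin (t / 2)| = Real.sin (|t| / 2) := by
    rw [abs_sin_half, ← cos_abs, ← abs_sin_half, abs_of_nonneg]
    exact sin_nonneg_of_nonneg_of_le_pi (by positivity) (by linarith [pi_pos])
  rw [coe_exp, coe_one, dist_eq_norm, mul_comm, norm_exp_I_mul_ofReal_sub_one, norm_mul,
    Real.norm_eq_abs, Real.norm_eq_abs, hsin, abs_two]

theorem dist_exp_one_le_iff {s t : ℝ} (hs : |s| ≤ π) (ht : |t| ≤ π) :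
    dist (exp s) 1 ≤ dist (exp t) 1 ↔ |s| ≤ |t| := by
  have hmem {u : ℝ} (hu : |u| ≤ π) : |u| / 2 ∈ Set.Icc (-(π / 2)) (π / 2) :=
    ⟨by linarith [abs_nonneg u, pi_pos], by linarith⟩
  rw [dist_exp_one_of_abs_le_pi hs, dist_exp_one_of_abs_le_pi ht, mul_le_mul_iff_right₀ two_pos,
    strictMonoOn_sin.le_iff_le (hmem hs) (hmem ht), div_le_div_iff_of_pos_right two_pos]

theorem coe_mem_slitPlane_of_dist_one_lt_two {z : Circle} (hz : dist z 1 < 2) :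
    (z : ℂ) ∈ slitPlane := by
  refine mem_slitPlane_iff_arg.2 ⟨fun harg => hz.ne ?_, coe_ne_zero z⟩
  rw [← exp_arg z, dist_exp_one_of_abs_le_pi (abs_arg_le_pi _), harg, abs_of_pos pi_pos,
    Real.sin_pi_div_two, mul_one]

end Circle

theorem Continuous.arg_coe_circle {Z : Type*} [TopologicalSpace Z] {f : Z → Circle}
    (hf : Continuous f) (h : ∀ x, (f x : ℂ) ∈ slitPlane) : Continuous fun x => arg (f x) :=
  continuousOn_arg.comp_continuous (continuous_subtype_val.comp hf) h

section Profinite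

variable {X : Type*} [TopologicalSpace X] [CompactSpace X] [T2Space X]
  [TotallyDisconnectedSpace X]

theorem DiscreteQuotient.exists_forall_proj_eq_dist_lt {Y : Type*} [PseudoMetricSpace Y]
    (g : C(X, Y)) {ε : ℝ} (hε : 0 < ε) :
    ∃ S : DiscreteQuotient X, ∀ x y, S.proj x = S.proj y → dist (g x) (g y) < ε := by
  let far : Set (X × X) := {p | ε ≤ dist (g p.1) (g p.2)}
  let rel (S : DiscreteQuotient X) : Set (X × X) := {p | S.proj p.1 = S.proj p.2}
  have hfar : IsCompact far :=
    (isClosed_le continuous_const (by fun_prop)).isCompact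
  have hrel (S : DiscreteQuotient X) : IsClosed (rel S) :=
    isClosed_eq (S.proj_continuous.comp continuous_fst) (S.proj_continuous.comp continuous_snd)
  have hdisj : far ∩ ⋂ S, rel S = ∅ := by
    refine Set.eq_empty_of_forall_notMem fun p ⟨hp, hpS⟩ => ?_
    have hdiag : p.1 = p.2 := DiscreteQuotient.eq_of_forall_proj_eq (Set.mem_iInter.1 hpS)
    simp only [far, Set.mem_ofPred_eq, hdiag, dist_self] at hp
    linarith
  have hdir : Directed (· ⊇ ·) rel :=
    Monotone.directed_ge fun S T hST p (hp : S.proj p.1 = S.proj p.2) =>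
      show T.proj p.1 = T.proj p.2 by rw [← DiscreteQuotient.ofLE_proj hST, hp,
        DiscreteQuotient.ofLE_proj]
  obtain ⟨S, hS⟩ := hfar.elim_directed_family_closed rel hrel hdisj hdir
  exact ⟨S, fun x y hxy => not_le.1 fun h => (Set.eq_empty_iff_forall_notMem.1 hS) (x, y) ⟨h, hxy⟩⟩

theorem Circle.exists_lift_of_totallyDisconnectedSpace (g : C(X, Circle)) :
    ∃ h : C(X, ℝ), ∀ x, Circle.exp (h x) = g x := by
  obtain ⟨S, hS⟩ := DiscreteQuotient.exists_forall_proj_eq_dist_lt g two_pos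
  obtain ⟨r, hr⟩ := S.proj_surjective.hasRightInverse
  let c : X → Circle := (g ∘ r) ∘ S.proj
  have hc : IsLocallyConstant c := S.proj_isLocallyConstant.comp _
  let q : X → Circle := fun x => g x * (c x)⁻¹
  have hq (x : X) : (q x : ℂ) ∈ slitPlane := by
    refine Circle.coe_mem_slitPlane_of_dist_one_lt_two ?_
    rw [Circle.dist_mul_inv_one]
    exact hS _ _ (hr (S.proj x)).symm
  have hc_cont : Continuous fun x => arg (c x) := (hc.comp fun z : Circle => arg z).continuous
  have hq_cont : Continuous fun x => arg (q x) :=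
    (g.continuous.mul hc.continuous.inv).arg_coe_circle hq
  refine ⟨⟨fun x => arg (c x) + arg (q x), hc_cont.add hq_cont⟩, fun x => ?_⟩
  simp only [ContinuousMap.coe_mk, Circle.exp_add, Circle.exp_arg, q]
  exact mul_inv_cancel_comm_assoc (c x) (g x)

end Profinite

section Extension

variable {X : Type*} [TopologicalSpace X] [NormalSpace X] {s : Set X}

theorem Circle.exists_restrict_eq_of_lift (hs : IsClosed s) {g : C(s, Circle)} (h : C(s, ℝ))
    (hh : ∀ p, exp (h p) = g p) : ∃ f : C(X, Circle), f.restrict s = g := by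
  obtain ⟨H, hH⟩ := h.exists_restrict_eq hs
  refine ⟨exp.comp H, ContinuousMap.ext fun p => ?_⟩
  simp [← hh, ← hH]

theorem Circle.exists_restrict_eq_forall_dist_one_le_of_lt_two (hs : IsClosed s)
    (g : C(s, Circle)) {D : ℝ} (hD₀ : 0 ≤ D) (hD₂ : D < 2) (hg : ∀ p, dist (g p) 1 ≤ D) :
    ∃ f : C(X, Circle), f.restrict s = g ∧ ∀ x, dist (f x) 1 ≤ D := by
  set θ := 2 * arcsin (D / 2)
  have hθ₀ : 0 ≤ θ := mul_nonneg zero_le_two (arcsin_nonneg.2 (by linarith))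
  have hθπ : |θ| ≤ π := by rw [abs_of_nonneg hθ₀]; linarith [arcsin_le_pi_div_two (D / 2)]
  have hθD : dist (exp θ) 1 = D := by
    rw [dist_exp_one_of_abs_le_pi hθπ, abs_of_nonneg hθ₀, mul_div_cancel_left₀ _ two_ne_zero,
      sin_arcsin (by linarith) (by linarith)]
    ring
  have hslit (p : s) : (g p : ℂ) ∈ slitPlane :=
    coe_mem_slitPlane_of_dist_one_lt_two ((hg p).trans_lt hD₂)
  let u : C(s, ℝ) := ⟨fun p => arg (g p), g.continuous.arg_coe_circle hslit⟩
  have hu (p : s) : u p ∈ Set.Icc (-θ) θ := by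
    rw [Set.mem_Icc, ← abs_le, ← abs_of_nonneg hθ₀]
    refine (dist_exp_one_le_iff (abs_arg_le_pi (g p)) hθπ).1 ?_
    rw [exp_arg, hθD]
    exact hg p
  obtain ⟨H, hHθ, hH⟩ := u.exists_restrict_eq_forall_mem_of_closed hu ⟨0, by simp [hθ₀]⟩ hs
  have hHabs (x : X) : |H x| ≤ |θ| := by rw [abs_of_nonneg hθ₀]; exact abs_le.2 (hHθ x)
  refine ⟨exp.comp H, ContinuousMap.ext fun p => ?_, fun x => ?_⟩
  · have hHp : H p = arg (g p) := DFunLike.congr_fun hH p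
    rw [ContinuousMap.restrict_apply, ContinuousMap.comp_apply, hHp, exp_arg]
  · rw [ContinuousMap.comp_apply, ← hθD, dist_exp_one_le_iff ((hHabs x).trans hθπ) hθπ]
    exact hHabs x

theorem Circle.exists_restrict_eq_forall_dist_one_le [T2Space X] [CompactSpace s]
    [TotallyDisconnectedSpace s] (g : C(s, Circle)) {D : ℝ} (hD₀ : 0 ≤ D)
    (hg : ∀ p, dist (g p) 1 ≤ D) :
    ∃ f : C(X, Circle), f.restrict s = g ∧ ∀ x, dist (f x) 1 ≤ D := by
  have hs : IsClosed s := (isCompact_iff_compactSpace.2 ‹_›).isClosed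
  rcases lt_or_ge D 2 with hD₂ | hD₂
  · exact exists_restrict_eq_forall_dist_one_le_of_lt_two hs g hD₀ hD₂ hg
  · obtain ⟨h, hh⟩ := exists_lift_of_totallyDisconnectedSpace g
    obtain ⟨f, hf⟩ := exists_restrict_eq_of_lift hs h hh
    exact ⟨f, hf, fun x => (dist_le_two _ _).trans hD₂⟩

end Extension

theorem Circle.bddAbove_range_dist_one {Y : Type*} (f : Y → Circle) :
    BddAbove (Set.range fun y => dist (f y) 1) :=
  ⟨2, Set.forall_mem_range.2 fun _ => dist_le_two _ _⟩

theorem Circle.iSup_dist_one_eq_of_restrict_eq {Y : Type*} [TopologicalSpace Y] {s : Set Y}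
    {f : C(Y, Circle)} {g : C(s, Circle)} (hfg : f.restrict s = g)
    (hf : ∀ y, dist (f y) 1 ≤ ⨆ p, dist (g p) 1) :
    ⨆ y, dist (f y) 1 = ⨆ p, dist (g p) 1 := by
  refine le_antisymm (Real.iSup_le hf (Real.iSup_nonneg fun _ => dist_nonneg)) ?_
  refine Real.iSup_le (fun p => ?_) (Real.iSup_nonneg fun _ => dist_nonneg)
  rw [← hfg]
  exact le_ciSup (bddAbove_range_dist_one f) (p : Y)

theorem stmt_15 (M : Type*) [MetricSpace M] [CompactSpace M]
    (hM : ¬ (Set.univ : Set M).Countable) :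
    ∃ P : Set M, Nonempty (P ≃ₜ (ℕ → Bool)) ∧
      Continuous (fun f : C(M, Circle) => f.restrict P) ∧
      (∀ f g : C(M, Circle), (f * g).restrict P = f.restrict P * g.restrict P) ∧
      Function.Surjective (fun f : C(M, Circle) => f.restrict P) ∧
      (∀ g : C(↥P, Circle), ∃ f : C(M, Circle), f.restrict P = g ∧
        (⨆ x : M, dist (f x) (1 : Circle)) = ⨆ p : ↥P, dist (g p) (1 : Circle)) := by
  obtain ⟨j, -, hj, hj_inj⟩ := isClosed_univ.exists_nat_bool_injection_of_not_countable hM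
  let e : (ℕ → Bool) ≃ₜ Set.range j := (hj.isClosedEmbedding hj_inj).isEmbedding.toHomeomorph
  have : CompactSpace (Set.range j) := e.compactSpace
  have : TotallyDisconnectedSpace (Set.range j) := e.totallyDisconnectedSpace
  have hext (g : C(Set.range j, Circle)) : ∃ f : C(M, Circle), f.restrict _ = g ∧
      ∀ x, dist (f x) 1 ≤ ⨆ p, dist (g p) 1 :=
    Circle.exists_restrict_eq_forall_dist_one_le g (Real.iSup_nonneg fun _ => dist_nonneg)
      (le_ciSup (Circle.bddAbove_range_dist_one g))
  refine ⟨Set.range j, ⟨e.symm⟩, ContinuousMap.continuous_restrict _, fun f g => rfl,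
    fun g => (hext g).imp fun f hf => hf.1, fun g => (hext g).imp fun f hf => ?_⟩
  exact ⟨hf.1, Circle.iSup_dist_one_eq_of_restrict_eq hf.1 hf.2⟩
end

section
/- Let γ_∞ be the product of standard Gaussian measures on ℝ^ℕ and let a ∈ ℝ, K ⊆ ℝ^ℕ Borel. Then the set A = {y ∈ ℝ^ℕ : γ_∞(√(1+a²)·K + a·y) > 0} is invariant under translation by all finitely supported elements of ℝ^ℕ; that is, if y ∈ A and h ∈ ℝ^ℕ has finite support, then y + h ∈ A. -/
open MeasureTheory ProbabilityTheory

/-!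
Splitting off one coordinate, independence writes `γ_∞` as the product of a one-dimensional
Gaussian with the law of the remaining coordinates; a shifted Gaussian is equivalent to the
centred one, so `γ_∞` is quasi-invariant under translations along a coordinate axis, hence
under all finitely supported translations. The set for `y + h` is the translate by `a • h`
of the set for `y`, so it cannot be null when the latter is not.
-/

lemma MeasureTheory.Measure.AbsolutelyContinuous.map_add_add {G : Type*} [AddSemigroup G] [MeasurableSpace G]
    [MeasurableAdd G] {μ : Measure G} {c d : G} (hc : μ.map (· + c) ≪ μ)
    (hd : μ.map (· + d) ≪ μ) : μ.map (· + (c + d)) ≪ μ := by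
  have hcomp : (· + (c + d)) = (· + d) ∘ (· + c) := by funext x; simp [add_assoc]
  rw [hcomp, ← Measure.map_map (measurable_add_const d) (measurable_add_const c)]
  exact (hc.map (measurable_add_const d)).trans hd

lemma indepFun_eval_restrict_ne {ι β : Type*} [MeasurableSpace β] {μ : Measure (ι → β)}
    (hμ : iIndepFun (fun i (x : ι → β) => x i) μ) (i : ι) :
    IndepFun (fun x => x i) (fun x (j : {j // j ≠ i}) => x j) μ := by
  have hle (j : ι) : MeasurableSpace.comap (fun x : ι → β => x j) inferInstance ≤
      MeasurableSpace.pi := (measurable_pi_apply j).comap_le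
  have hrest : MeasurableSpace.comap (fun x (j : {j // j ≠ i}) => x j) MeasurableSpace.pi
      = ⨆ j ∈ ({i}ᶜ : Set ι), MeasurableSpace.comap (fun x : ι → β => x j) inferInstance := by
    rw [MeasurableSpace.pi, MeasurableSpace.comap_iSup, ← iSup_subtype'' ({i}ᶜ : Set ι)]
    exact iSup_congr fun j => MeasurableSpace.comap_comp
  have := indep_iSup_of_disjoint hle hμ.iIndep (S := {i}) (T := {i}ᶜ) disjoint_compl_right
  rwa [iSup_singleton, ← hrest] at this

lemma map_add_single_absolutelyContinuous {ι : Type*} [Countable ι] [DecidableEq ι]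
    {μ : Measure (ι → ℝ)} [IsProbabilityMeasure μ]
    (hμ : iIndepFun (fun i (x : ι → ℝ) => x i) μ) (i : ι) {t : ℝ}
    (ht : (μ.map (· i)).map (· + t) ≪ μ.map (· i)) :
    μ.map (· + Pi.single i t) ≪ μ := by
  let e : (ι → ℝ) ≃ᵐ ℝ × ({j // j ≠ i} → ℝ) := (Homeomorph.funSplitAt ℝ i).toMeasurableEquiv
  have he : ⇑e = fun x => (x i, fun j : {j // j ≠ i} => x j) := rfl
  have hrest : Measurable fun (x : ι → ℝ) (j : {j // j ≠ i}) => x j := by fun_prop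
  set ρ := μ.map fun x (j : {j // j ≠ i}) => x j
  have hlaw : μ.map e = (μ.map (· i)).prod ρ := by
    rw [he, ← (indepFun_iff_map_prod_eq_prod_map_map (measurable_pi_apply i).aemeasurable
      hrest.aemeasurable).mp (indepFun_eval_restrict_ne hμ i)]
  have hshift : ⇑e ∘ (· + Pi.single i t) = Prod.map (· + t) id ∘ e := by
    funext x
    ext j
    · simp [he]
    · simp [he, Pi.single_eq_of_ne j.2]
  have hlaw_shift : (μ.map (· + Pi.single i t)).map e = ((μ.map (· i)).map (· + t)).prod ρ := by
    rw [Measure.map_map e.measurable (measurable_add_const _), hshift,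
      ← Measure.map_map (by fun_prop) e.measurable, hlaw,
      ← Measure.map_prod_map _ _ (measurable_add_const t) measurable_id, Measure.map_id]
  have hac : (μ.map (· + Pi.single i t)).map e ≪ μ.map e := by
    rw [hlaw_shift, hlaw]
    exact ht.prod .rfl
  simpa only [e.map_symm_map] using hac.map e.symm.measurable

lemma map_add_absolutelyContinuous_of_support_finite {ι : Type*} [Countable ι]
    {μ : Measure (ι → ℝ)} [IsProbabilityMeasure μ]
    (hμ : iIndepFun (fun i (x : ι → ℝ) => x i) μ)
    (hquasi : ∀ i t, (μ.map (· i)).map (· + t) ≪ μ.map (· i))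
    {c : ι → ℝ} (hc : c.support.Finite) : μ.map (· + c) ≪ μ := by
  classical
  have hsum : c = ∑ i ∈ hc.toFinset, Pi.single i (c i) := by
    funext j
    rw [Finset.sum_apply, Finset.sum_pi_single]
    split_ifs with hj
    · rfl
    · simpa using hj
  rw [hsum]
  refine Finset.sum_induction _ (fun c => μ.map (· + c) ≪ μ)
    (fun _ _ => Measure.AbsolutelyContinuous.map_add_add) ?_
    (fun i _ => map_add_single_absolutelyContinuous hμ i (hquasi i (c i)))
  simpa only [add_zero, Measure.map_id'] using Measure.AbsolutelyContinuous.rfl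

lemma IsStdGaussianSeq.map_add_absolutelyContinuous {γ : Measure (ℕ → ℝ)}
    (hγ : IsStdGaussianSeq γ) {c : ℕ → ℝ} (hc : c.support.Finite) : γ.map (· + c) ≪ γ := by
  obtain ⟨_, hindep, hlaw⟩ := hγ
  refine map_add_absolutelyContinuous_of_support_finite hindep (fun i t => ?_) hc
  rw [hlaw, gaussianReal_map_add_const, zero_add]
  exact (gaussianReal_absolutelyContinuous t one_ne_zero).trans
    (gaussianReal_absolutelyContinuous' 0 one_ne_zero)

theorem stmt_19_general (γinf : Measure (ℕ → ℝ)) (hγ : IsStdGaussianSeq γinf) (a : ℝ)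
    (K : Set (ℕ → ℝ)) (y h : ℕ → ℝ)
    (hh : (Function.support h).Finite)
    (hy : 0 < γinf ((fun x => Real.sqrt (1 + a ^ 2) • x + a • y) '' K)) :
    0 < γinf ((fun x => Real.sqrt (1 + a ^ 2) • x + a • (y + h)) '' K) := by
  set T := (fun x => Real.sqrt (1 + a ^ 2) • x + a • (y + h)) '' K
  have hshift : (fun x => Real.sqrt (1 + a ^ 2) • x + a • y) '' K ⊆ (· + a • h) ⁻¹' T := by
    rintro _ ⟨x, hx, rfl⟩
    exact ⟨x, hx, by simp only [smul_add, add_assoc]⟩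
  have hac := hγ.map_add_absolutelyContinuous (hh.subset (Function.support_const_smul_subset a h))
  refine pos_iff_ne_zero.mpr fun hT => hy.ne' (measure_mono_null hshift ?_)
  exact Measure.preimage_null_of_map_null (measurable_add_const _).aemeasurable (hac hT)

theorem stmt_19 (γinf : Measure (ℕ → ℝ)) (hγ : IsStdGaussianSeq γinf) (a : ℝ)
    (K : Set (ℕ → ℝ)) (hK : MeasurableSet K) (y h : ℕ → ℝ)
    (hh : (Function.support h).Finite)
    (hy : 0 < γinf ((fun x => Real.sqrt (1 + a ^ 2) • x + a • y) '' K)) :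
    0 < γinf ((fun x => Real.sqrt (1 + a ^ 2) • x + a • (y + h)) '' K) :=
  stmt_19_general γinf hγ a K y h hh hy
end
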